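/- Let ℓ ≥ 5 be a prime and a ≥ 1 an integer. Then for every integer x ≥ 1, one has k(ℓ,a,1,x) ≤ p_ℓ(x)·ℓ^(a·x). -/

import Mathlib

/-- `multipartitions b w` is the number of `b`-multipartitions of `w`. -/
noncomputable def multipartitions (b w : ℕ) : ℕ :=
  Nat.card {f : Fin b → Σ n : ℕ, n.Partition // (∑ i, (f i).1) = w}

/-- An `ℓ`-composition of `w` is a finitely supported sequence `(w₀, w₁, …)` of
non-negative integers with `∑ i, w_i * ℓ^i = w`; `numLCompositions ℓ w` counts them. -/
noncomputable def numLCompositions (ℓ w : ℕ) : ℕ :=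
  Nat.card {f : ℕ →₀ ℕ // (f.sum fun i c => c * ℓ ^ i) = w}

/-- `kSum ℓ a d w = Σ k(d+(ℓ^a−1)/d, w₀) · ∏_{i≥1} k((ℓ^a−ℓ^{a−1})/d, w_i)`, the sum
running over all `ℓ`-compositions `(w₀, w₁, …)` of `w`.  (Since `k(b, 0) = 1`, the
product over `i ≥ 1` may be taken over the nonzero entries of the composition.) -/
noncomputable def kSum (ℓ a d w : ℕ) : ℕ :=
  ∑ᶠ (f : ℕ →₀ ℕ) (_ : (f.sum fun i c => c * ℓ ^ i) = w),
    multipartitions (d + (ℓ ^ a - 1) / d) (f 0) *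
      ∏ i ∈ f.support.erase 0, multipartitions ((ℓ ^ a - ℓ ^ (a - 1)) / d) (f i)


/-!
Each summand of `kSum ℓ a 1 x` is at most `ℓ ^ (a * x)` and there are `numLCompositions ℓ x`
summands. Indeed both multipartition parameters `ℓ ^ a` and `ℓ ^ a - ℓ ^ (a - 1)` lie between
`3` and `ℓ ^ a`, the entries of an `ℓ`-composition of `x` add up to at most `x`, and
`k(b, w) ≤ b ^ w` for `b ≥ 3`.

For the last bound, a partition of `t` is the image of one of the `2 ^ (t - 1)` compositions of
`t`, so `k(b, ·)` is dominated by the count `M b` of `b`-tuples of compositions. Since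
`2 ^ t = 2 * 2 ^ (t - 1)` except at `t = 0`, these counts satisfy
`M (b + 1) (w + 1) + M b w = M b (w + 1) + 2 * M (b + 1) w`, and this recursion propagates
`M b (w + 1) ≤ b * M b w` from `b = 3` to all larger `b`.
-/

open Finset

abbrev Multipartition (b w : ℕ) : Type :=
  {f : Fin b → Σ n : ℕ, n.Partition // ∑ i, (f i).1 = w}

def Multipartition.consEquiv (b w : ℕ) :
    Multipartition (b + 1) w ≃
      Σ p : antidiagonal w, p.1.1.Partition × Multipartition b p.1.2 where
  toFun f := ⟨⟨((f.1 0).1, ∑ i : Fin b, (f.1 i.succ).1),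
      HasAntidiagonal.mem_antidiagonal.2 ((Fin.sum_univ_succ fun i => (f.1 i).1).symm.trans f.2)⟩,
    (f.1 0).2, ⟨fun i => f.1 i.succ, rfl⟩⟩
  invFun g := ⟨Fin.cons ⟨g.1.1.1, g.2.1⟩ g.2.2.1, by
    simp only [Fin.sum_univ_succ, Fin.cons_zero, Fin.cons_succ, g.2.2.2]
    exact HasAntidiagonal.mem_antidiagonal.1 g.1.2⟩
  left_inv f := Subtype.ext <| funext fun i => by cases i using Fin.cases <;> rfl
  right_inv := by
    rintro ⟨⟨⟨t, u⟩, h⟩, π, g, hg⟩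
    dsimp only at hg
    subst hg
    rfl

instance Multipartition.finite : ∀ b w, Finite (Multipartition b w)
  | 0, _ => Finite.of_subsingleton
  | b + 1, w =>
    have := fun u => Multipartition.finite b u
    Finite.of_equiv _ (Multipartition.consEquiv b w).symm

theorem multipartitions_succ (b w : ℕ) :
    multipartitions (b + 1) w =
      ∑ p ∈ antidiagonal w, Nat.card p.1.Partition * multipartitions b p.2 := by
  rw [multipartitions, Nat.card_congr (Multipartition.consEquiv b w), Nat.card_sigma,
    ← sum_coe_sort (antidiagonal w)]
  simp only [Nat.card_prod]
  rfl

theorem Nat.card_partition_le (n : ℕ) : Nat.card n.Partition ≤ 2 ^ (n - 1) := by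
  rw [Nat.card_eq_fintype_card, ← composition_card]
  exact Fintype.card_le_of_surjective _ Nat.Partition.ofComposition_surj

/-- `multicompositions b w` counts `b`-tuples of compositions of total size `w`: there are
`2 ^ (t - 1)` compositions of `t`, also for `t = 0` thanks to truncated subtraction. -/
def multicompositions : ℕ → ℕ → ℕ
  | 0, w => if w = 0 then 1 else 0
  | b + 1, w => ∑ p ∈ antidiagonal w, 2 ^ (p.1 - 1) * multicompositions b p.2

theorem multipartitions_le_multicompositions (b w : ℕ) :
    multipartitions b w ≤ multicompositions b w := by
  induction b generalizing w with
  | zero =>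
    rw [multicompositions]
    split_ifs with hw
    · exact Finite.card_le_one_iff_subsingleton.2 inferInstance
    · have : IsEmpty (Multipartition 0 w) := ⟨fun f => hw (by simpa using f.2.symm)⟩
      exact (Nat.card_of_isEmpty (α := Multipartition 0 w)).le
  | succ b ih =>
    rw [multipartitions_succ, multicompositions]
    exact sum_le_sum fun p _ => Nat.mul_le_mul (Nat.card_partition_le _) (ih _)

theorem sum_antidiagonal_two_pow_mul_add (X : ℕ → ℕ) (w : ℕ) :
    ∑ p ∈ antidiagonal w, 2 ^ p.1 * X p.2 + X w =
      2 * ∑ p ∈ antidiagonal w, 2 ^ (p.1 - 1) * X p.2 := by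
  cases w with
  | zero =>
    simp only [HasAntidiagonal.antidiagonal_zero, sum_singleton, pow_zero, one_mul, zero_tsub]
    ring
  | succ w =>
    simp only [Nat.sum_antidiagonal_succ, mul_add, mul_sum, Nat.add_sub_cancel]
    simp only [pow_zero, zero_le, Nat.sub_eq_zero_of_le, one_mul, pow_succ]
    ring_nf

theorem multicompositions_succ_succ (b w : ℕ) :
    multicompositions (b + 1) (w + 1) + multicompositions b w =
      multicompositions b (w + 1) + 2 * multicompositions (b + 1) w := by
  rw [multicompositions, multicompositions, Nat.sum_antidiagonal_succ,
    ← sum_antidiagonal_two_pow_mul_add]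
  simp only [Nat.add_sub_cancel, zero_le, Nat.sub_eq_zero_of_le, pow_zero, one_mul]
  ring

theorem multicompositions_zero_right (b : ℕ) : multicompositions b 0 = 1 := by
  induction b with
  | zero => rfl
  | succ b ih => simp [multicompositions, ih]

theorem multicompositions_one (w : ℕ) : multicompositions 1 w = 2 ^ (w - 1) := by
  rw [multicompositions, sum_eq_single (w, 0)]
  · simp [multicompositions]
  · rintro ⟨t, u⟩ h hne
    have : u ≠ 0 := by rintro rfl; simp_all
    simp [multicompositions, this]
  · simp

theorem multicompositions_le_succ (b w : ℕ) :
    multicompositions b w ≤ multicompositions (b + 1) w := by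
  rw [multicompositions]
  simpa using single_le_sum (f := fun p : ℕ × ℕ => 2 ^ (p.1 - 1) * multicompositions b p.2)
    (fun _ _ => Nat.zero_le _) (by simp : (0, w) ∈ antidiagonal w)

theorem multicompositions_add_one_le (b : ℕ) {w : ℕ} (hw : w ≠ 0) :
    multicompositions b w + multicompositions 1 w ≤ multicompositions (b + 1) w :=
  calc multicompositions b w + multicompositions 1 w
      = ∑ p ∈ {(0, w), (w, 0)}, 2 ^ (p.1 - 1) * multicompositions b p.2 := by
        rw [sum_pair (by simp [Ne.symm hw])]
        simp [multicompositions_one, multicompositions_zero_right]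
    _ ≤ ∑ p ∈ antidiagonal w, 2 ^ (p.1 - 1) * multicompositions b p.2 :=
        sum_le_sum_of_subset (by simp [insert_subset_iff])
    _ = multicompositions (b + 1) w := rfl

theorem multicompositions_succ_le_mul {b : ℕ} (hb : 3 ≤ b) (w : ℕ) :
    multicompositions b (w + 1) ≤ b * multicompositions b w := by
  induction b, hb using Nat.le_induction generalizing w with
  | base =>
    cases w with
    | zero => decide
    | succ w =>
      have h₁ : multicompositions 2 (w + 2) + 2 ^ w =
          2 ^ (w + 1) + 2 * multicompositions 2 (w + 1) := by
        simpa [multicompositions_one] using multicompositions_succ_succ 1 (w + 1)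
      have h₂ : multicompositions 3 (w + 2) + multicompositions 2 (w + 1) =
          multicompositions 2 (w + 2) + 2 * multicompositions 3 (w + 1) :=
        multicompositions_succ_succ 2 (w + 1)
      have hlow : multicompositions 2 (w + 1) + 2 ^ w ≤ multicompositions 3 (w + 1) := by
        simpa [multicompositions_one] using multicompositions_add_one_le 2 (Nat.succ_ne_zero w)
      rw [pow_succ] at h₁
      show multicompositions 3 (w + 2) ≤ 3 * multicompositions 3 (w + 1)
      omega
  | succ b hb ih =>
    have hrec := multicompositions_succ_succ b w
    have hmono := multicompositions_le_succ b w
    nlinarith [ih w]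

theorem multicompositions_le_pow {b : ℕ} (hb : 3 ≤ b) (w : ℕ) :
    multicompositions b w ≤ b ^ w := by
  induction w with
  | zero => rw [multicompositions_zero_right, pow_zero]
  | succ w ih =>
    calc multicompositions b (w + 1) ≤ b * multicompositions b w :=
          multicompositions_succ_le_mul hb w
      _ ≤ b * b ^ w := Nat.mul_le_mul_left b ih
      _ = b ^ (w + 1) := (pow_succ' b w).symm

theorem multipartitions_le_pow {b : ℕ} (hb : 3 ≤ b) (w : ℕ) : multipartitions b w ≤ b ^ w :=
  (multipartitions_le_multicompositions b w).trans (multicompositions_le_pow hb w)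

namespace Finsupp

variable {σ : Type*}

theorem degree_le_weight {w : σ → ℕ} (hw : ∀ i, w i ≠ 0) (f : σ →₀ ℕ) :
    f.degree ≤ weight w f := by
  rw [degree_apply, weight_apply, Finsupp.sum]
  exact Finset.sum_le_sum fun i _ => Nat.le_mul_of_pos_right _ (Nat.pos_of_ne_zero (hw i))

theorem finite_setOf_weight_le {w : σ → ℕ} (hw : ∀ i, w i ≠ 0) {n : ℕ}
    (hn : {i | w i ≤ n}.Finite) : {f : σ →₀ ℕ | weight w f ≤ n}.Finite := by
  have := hn.to_subtype
  have hsupp : ∀ f ∈ {f : σ →₀ ℕ | weight w f ≤ n}, ∀ i, f i ≠ 0 → w i ≤ n :=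
    fun f hf i hi => (le_weight_of_ne_zero' w hi).trans hf
  refine Set.Finite.of_finite_image (f := fun f (i : {i | w i ≤ n}) => f i) ?_ ?_
  · refine (Set.Finite.pi (t := fun _ => Set.Iic n) fun _ => Set.finite_Iic n).subset ?_
    rintro _ ⟨f, hf, rfl⟩ i -
    exact (le_weight w (hw i) f).trans hf
  · intro f hf g hg hfg
    ext i
    by_cases hi : w i ≤ n
    · exact congrFun hfg ⟨i, hi⟩
    · rw [not_imp_comm.1 (hsupp f hf i) hi, not_imp_comm.1 (hsupp g hg i) hi]

theorem apply_add_sum_support_erase [DecidableEq σ] (f : σ →₀ ℕ) (y : σ) :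
    f y + ∑ i ∈ f.support.erase y, f i = f.degree := by
  by_cases hy : y ∈ f.support
  · exact Finset.add_sum_erase _ _ hy
  · rw [notMem_support_iff.1 hy, erase_eq_of_notMem hy, zero_add, degree_apply]

end Finsupp

theorem finsum_mem_le_card_mul {α : Type*} {s : Set α} (hs : s.Finite) {f : α → ℕ} {c : ℕ}
    (h : ∀ i ∈ s, f i ≤ c) : ∑ᶠ i ∈ s, f i ≤ Nat.card s * c := by
  rw [finsum_mem_eq_finite_toFinset_sum _ hs, Nat.card_eq_card_finite_toFinset hs, ← smul_eq_mul]
  exact sum_le_card_nsmul _ _ _ fun i hi => h i (hs.mem_toFinset.1 hi)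

theorem multipartitions_mul_prod_le (f : ℕ →₀ ℕ) {b₀ b₁ : ℕ} (hb₁ : 3 ≤ b₁) (hb : b₁ ≤ b₀) :
    multipartitions b₀ (f 0) * ∏ i ∈ f.support.erase 0, multipartitions b₁ (f i) ≤
      b₀ ^ f.degree :=
  calc _ ≤ b₀ ^ f 0 * ∏ i ∈ f.support.erase 0, b₀ ^ f i :=
        Nat.mul_le_mul (multipartitions_le_pow (hb₁.trans hb) _) <| prod_le_prod' fun i _ =>
          (multipartitions_le_pow hb₁ _).trans (Nat.pow_le_pow_left hb _)
    _ = b₀ ^ f.degree := by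
      rw [prod_pow_eq_pow_sum, ← pow_add, Finsupp.apply_add_sum_support_erase]

theorem kSum_le_numLCompositions_mul_general (ℓ a : ℕ) (hℓ5 : 5 ≤ ℓ)
    (ha : 1 ≤ a) :
    ∀ x : ℕ, 1 ≤ x → kSum ℓ a 1 x ≤ numLCompositions ℓ x * ℓ ^ (a * x) := by
  intro x _
  have hw : ∀ i, ℓ ^ i ≠ 0 := fun i => pow_ne_zero i (by omega)
  have hS : {f : ℕ →₀ ℕ | Finsupp.weight (ℓ ^ ·) f = x}.Finite :=
    (Finsupp.finite_setOf_weight_le hw <| (Set.finite_Iic x).subset fun i hi =>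
      (Nat.lt_pow_self (by omega : 1 < ℓ)).le.trans hi).subset fun f hf => hf.le
  obtain ⟨a, rfl⟩ := Nat.exists_eq_add_of_le' ha
  have hb₁ : 3 ≤ ℓ ^ (a + 1) - ℓ ^ a := by
    have := Nat.one_le_pow a ℓ (by omega)
    have := Nat.mul_le_mul_left (ℓ ^ a) hℓ5
    rw [pow_succ]
    omega
  have hb₀ : 1 + (ℓ ^ (a + 1) - 1) / 1 = ℓ ^ (a + 1) := by
    have := Nat.one_le_pow (a + 1) ℓ (by omega)
    omega
  refine finsum_mem_le_card_mul hS fun f hf => ?_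
  rw [hb₀, Nat.div_one, Nat.add_sub_cancel]
  calc _ ≤ (ℓ ^ (a + 1)) ^ f.degree := multipartitions_mul_prod_le f hb₁ (Nat.sub_le _ _)
    _ ≤ (ℓ ^ (a + 1)) ^ x := Nat.pow_le_pow_right (Nat.pos_of_ne_zero (hw _))
        (hf ▸ Finsupp.degree_le_weight hw f)
    _ = ℓ ^ ((a + 1) * x) := (pow_mul ℓ (a + 1) x).symm

theorem kSum_le_numLCompositions_mul (ℓ a : ℕ) (hℓ : ℓ.Prime) (hℓ5 : 5 ≤ ℓ)
    (ha : 1 ≤ a) :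
    ∀ x : ℕ, 1 ≤ x → kSum ℓ a 1 x ≤ numLCompositions ℓ x * ℓ ^ (a * x) :=
  kSum_le_numLCompositions_mul_general ℓ a hℓ5 ha
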